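/- arXiv:1506.04263 — 4 statements merged into one kernel-verified Lean document; each statement's English description precedes it below -/
import Mathlib

section
/- For every c₁ > 0 there exist c₂ > 0 and x₀ > 0 such that for all real x ≥ x₀, exp(−x)·x^⌈c₁·x⌉ / (⌈c₁·x⌉)! ≥ exp(−c₂·x), where ⌈·⌉ denotes the ceiling and n! the factorial of the natural number n. -/
/-!
Write `n = ⌈c₁ x⌉₊`, so `n ≤ a x` with `a = c₁ + 1` once `x ≥ 1`. The crude bound `n! ≤ nⁿ` gives
`xⁿ / n! ≥ (x / n)ⁿ ≥ a⁻ⁿ ≥ exp (-(a log a) x)`, hence the claim with `c₂ = 1 + a log a`.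
-/

open Real Nat

lemma div_natCast_pow_le_pow_div_factorial {x : ℝ} (hx : 0 ≤ x) (n : ℕ) :
    (x / n) ^ n ≤ x ^ n / n ! := by
  rw [div_pow]
  exact div_le_div_of_nonneg_left (by positivity) (by positivity)
    (by exact_mod_cast Nat.factorial_le_pow n)

lemma exp_neg_mul_log_mul_le_div_natCast_pow {a x : ℝ} (ha : 1 ≤ a) (hx : 0 ≤ x) {n : ℕ}
    (hn : n ≤ a * x) : exp (-(a * log a) * x) ≤ (x / n) ^ n := by
  have hlog : 0 ≤ log a := log_nonneg ha
  rcases n.eq_zero_or_pos with rfl | hn0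
  · simpa using mul_nonneg (mul_nonneg (by linarith) hlog) hx
  have hnR : (0 : ℝ) < n := by exact_mod_cast hn0
  calc exp (-(a * log a) * x) ≤ exp (-(n * log a)) := exp_le_exp.mpr (by nlinarith)
    _ = a⁻¹ ^ n := by rw [exp_neg, exp_nat_mul, exp_log (by linarith), inv_pow]
    _ ≤ (x / n) ^ n := by
      refine pow_le_pow_left₀ (by positivity) ?_ n
      rw [le_div_iff₀ hnR, inv_mul_le_iff₀ (by linarith)]
      exact hn

/-- For every `c₁ > 0` there exist `c₂ > 0` and `x₀ > 0` such that for all `x ≥ x₀`,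
`exp(−x)·x^⌈c₁·x⌉ / (⌈c₁·x⌉)! ≥ exp(−c₂·x)`. -/
theorem stmt_2 (c₁ : ℝ) (hc₁ : 0 < c₁) :
    ∃ c₂ : ℝ, 0 < c₂ ∧ ∃ x₀ : ℝ, 0 < x₀ ∧ ∀ x : ℝ, x₀ ≤ x →
      Real.exp (-c₂ * x) ≤ Real.exp (-x) * x ^ (⌈c₁ * x⌉₊) / (Nat.factorial ⌈c₁ * x⌉₊) := by
  have ha : 1 ≤ c₁ + 1 := by linarith
  refine ⟨1 + (c₁ + 1) * log (c₁ + 1),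
    add_pos_of_pos_of_nonneg one_pos (mul_nonneg (by linarith) (log_nonneg ha)), 1, one_pos,
    fun x hx => ?_⟩
  have hn : (⌈c₁ * x⌉₊ : ℝ) ≤ (c₁ + 1) * x := by
    have := Nat.ceil_lt_add_one (by positivity : 0 ≤ c₁ * x)
    nlinarith
  calc exp (-(1 + (c₁ + 1) * log (c₁ + 1)) * x)
      = exp (-x) * exp (-((c₁ + 1) * log (c₁ + 1)) * x) := by rw [← exp_add]; ring_nf
    _ ≤ exp (-x) * (x / ⌈c₁ * x⌉₊) ^ ⌈c₁ * x⌉₊ := by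
      gcongr
      exact exp_neg_mul_log_mul_le_div_natCast_pow ha (by linarith) hn
    _ ≤ exp (-x) * (x ^ ⌈c₁ * x⌉₊ / ⌈c₁ * x⌉₊ !) := by
      gcongr
      exact div_natCast_pow_le_pow_div_factorial (by linarith) _
    _ = _ := (mul_div_assoc ..).symm
end

section
/- Fix p ∈ (0,1), λ ∈ (1−p, 1), and a, b > 0. For each w > 0 let A_w and D_w be independent random variables on a common probability space, where A_w has the Poisson distribution with mean λ·a·w and D_w has the Poisson distribution with mean (1−p)·a·w. Then there exist γ > 0, c > 0 and w₀ > 0 such that for all w ≥ w₀, P(A_w − D_w ≤ −b·w) ≥ c·exp(−γ·w). -/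
open MeasureTheory Real ProbabilityTheory

/-- `D` has the Poisson distribution with mean `μ` under the probability measure `P`:
`P(D = k) = exp(−μ)·μ^k / k!` for every `k ∈ ℕ`. -/
def HasPoissonDist {Ω : Type*} [MeasurableSpace Ω] (P : Measure Ω) (D : Ω → ℕ) (μ : ℝ) : Prop :=
  ∀ k : ℕ, P {ω | D ω = k} = ENNReal.ofReal (Real.exp (-μ) * μ ^ k / (Nat.factorial k))

/-- Fix `p ∈ (0,1)`, `λ ∈ (1−p,1)`, `a, b > 0`. If for each `w > 0`, `A_w` and `D_w` are
independent Poisson random variables with means `λ·a·w` and `(1−p)·a·w`, then there exist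
`γ > 0`, `c > 0`, `w₀ > 0` such that for all `w ≥ w₀`,
`P(A_w − D_w ≤ −b·w) ≥ c·exp(−γ·w)`. -/
theorem stmt_3 (p lam a b : ℝ) (hp : p ∈ Set.Ioo (0 : ℝ) 1) (hlam : lam ∈ Set.Ioo (1 - p) 1)
    (ha : 0 < a) (hb : 0 < b)
    (Ω : ℝ → Type) (mΩ : ∀ w, MeasurableSpace (Ω w)) (P : ∀ w, Measure (Ω w))
    (hP : ∀ w, IsProbabilityMeasure (P w))
    (A D : ∀ w, Ω w → ℕ)
    (hmeasA : ∀ w, Measurable (A w)) (hmeasD : ∀ w, Measurable (D w))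
    (hA : ∀ w, 0 < w → HasPoissonDist (P w) (A w) (lam * a * w))
    (hD : ∀ w, 0 < w → HasPoissonDist (P w) (D w) ((1 - p) * a * w))
    (hindep : ∀ w, 0 < w → IndepFun (A w) (D w) (P w)) :
    ∃ γ : ℝ, 0 < γ ∧ ∃ c : ℝ, 0 < c ∧ ∃ w₀ : ℝ, 0 < w₀ ∧ ∀ w : ℝ, w₀ ≤ w →
      ENNReal.ofReal (c * Real.exp (-γ * w)) ≤
        P w {ω | (A w ω : ℝ) - (D w ω : ℝ) ≤ -b * w} := by
  obtain ⟨hp0, hp1⟩ := hp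
  obtain ⟨hl1, hl2⟩ := hlam
  have hq : 0 < 1 - p := by linarith
  have hlam0 : 0 < lam := lt_trans hq hl1
  set r : ℝ := (1 - p) * a / (2 * b) with hr
  have hr0 : 0 < r := by positivity
  set s : ℝ := min r 1 with hs
  have hs0 : 0 < s := lt_min hr0 one_pos
  have hs1 : s ≤ 1 := min_le_right _ _
  set L : ℝ := -Real.log s with hL
  have hL0 : 0 ≤ L := by
    have := Real.log_nonpos (le_of_lt hs0) hs1
    simp only [hL]; linarith
  refine ⟨(lam + (1 - p)) * a + 2 * b * L, by nlinarith, 1, one_pos, max 1 (1 / b),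
    lt_of_lt_of_le one_pos (le_max_left _ _), ?_⟩
  intro w hw
  have hw1 : 1 ≤ w := le_trans (le_max_left _ _) hw
  have hwb : 1 / b ≤ w := le_trans (le_max_right _ _) hw
  have hw0 : 0 < w := lt_of_lt_of_le one_pos hw1
  have hbw0 : 0 < b * w := by positivity
  have hbw1 : 1 ≤ b * w := by
    rw [div_le_iff₀ hb] at hwb
    linarith
  set k : ℕ := ⌈b * w⌉₊ with hk
  have hkb : b * w ≤ (k : ℝ) := Nat.le_ceil _
  have hk2 : (k : ℝ) ≤ 2 * (b * w) := by
    have := Nat.ceil_lt_add_one (le_of_lt hbw0)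
    have hk' : (k : ℝ) < b * w + 1 := this
    linarith
  have hkpos : 0 < k := Nat.ceil_pos.mpr hbw0
  have hkR : (0 : ℝ) < (k : ℝ) := by exact_mod_cast hkpos
  set μ : ℝ := (1 - p) * a * w with hμ
  have hμ0 : 0 < μ := by positivity
  -- the real inequality
  have hfact : ((Nat.factorial k : ℝ)) ≤ (k : ℝ) ^ k := by
    exact_mod_cast Nat.factorial_le_pow k
  have hfactpos : (0 : ℝ) < (Nat.factorial k : ℝ) := by
    exact_mod_cast Nat.factorial_pos k
  have step1 : (μ / k) ^ k ≤ μ ^ k / (Nat.factorial k) := by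
    rw [div_pow]
    exact div_le_div_of_nonneg_left (by positivity) hfactpos hfact
  have hsμk : s ≤ μ / k := by
    have h1 : μ / (2 * (b * w)) ≤ μ / k :=
      div_le_div_of_nonneg_left (le_of_lt hμ0) hkR hk2
    have h2 : r = μ / (2 * (b * w)) := by
      rw [hr, hμ]; field_simp
    calc s ≤ r := min_le_left _ _
      _ = μ / (2 * (b * w)) := h2
      _ ≤ μ / k := h1
  have step2 : s ^ k ≤ (μ / k) ^ k := pow_le_pow_left₀ (le_of_lt hs0) hsμk k
  have step3 : Real.exp (-(2 * b * L) * w) ≤ s ^ k := by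
    have e1 : Real.exp (-(2 * b * L) * w) = s ^ (2 * (b * w)) := by
      rw [Real.rpow_def_of_pos hs0]
      congr 1
      simp only [hL]
      ring
    have e2 : s ^ (2 * (b * w)) ≤ s ^ ((k : ℝ)) :=
      Real.rpow_le_rpow_of_exponent_ge hs0 hs1 hk2
    rw [e1]
    calc s ^ (2 * (b * w)) ≤ s ^ ((k : ℝ)) := e2
      _ = s ^ k := by rw [Real.rpow_natCast]
  have key : Real.exp (-((lam + (1 - p)) * a + 2 * b * L) * w) ≤
      (Real.exp (-(lam * a * w)) * (lam * a * w) ^ 0 / (Nat.factorial 0)) *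
      (Real.exp (-μ) * μ ^ k / (Nat.factorial k)) := by
    have edecomp : Real.exp (-((lam + (1 - p)) * a + 2 * b * L) * w) =
        Real.exp (-(lam * a * w)) * Real.exp (-μ) * Real.exp (-(2 * b * L) * w) := by
      rw [← Real.exp_add, ← Real.exp_add, hμ]
      congr 1
      ring
    rw [edecomp]
    have h3 : Real.exp (-(2 * b * L) * w) ≤ μ ^ k / (Nat.factorial k) :=
      le_trans step3 (le_trans step2 step1)
    have h4 : Real.exp (-μ) * Real.exp (-(2 * b * L) * w) ≤
        Real.exp (-μ) * (μ ^ k / (Nat.factorial k)) :=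
      mul_le_mul_of_nonneg_left h3 (le_of_lt (Real.exp_pos _))
    calc Real.exp (-(lam * a * w)) * Real.exp (-μ) * Real.exp (-(2 * b * L) * w)
        = Real.exp (-(lam * a * w)) * (Real.exp (-μ) * Real.exp (-(2 * b * L) * w)) := by ring
      _ ≤ Real.exp (-(lam * a * w)) * (Real.exp (-μ) * (μ ^ k / (Nat.factorial k))) :=
          mul_le_mul_of_nonneg_left h4 (le_of_lt (Real.exp_pos _))
      _ = (Real.exp (-(lam * a * w)) * (lam * a * w) ^ 0 / (Nat.factorial 0)) *
          (Real.exp (-μ) * μ ^ k / (Nat.factorial k)) := by norm_num; ring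
  -- measure side
  have hsub : ((A w) ⁻¹' {0} ∩ (D w) ⁻¹' {k}) ⊆
      {ω | (A w ω : ℝ) - (D w ω : ℝ) ≤ -b * w} := by
    rintro ω ⟨h1, h2⟩
    simp only [Set.mem_preimage, Set.mem_singleton_iff] at h1 h2
    simp only [Set.mem_setOf_eq, h1, h2]
    push_cast
    linarith
  have hmul := (hindep w hw0).measure_inter_preimage_eq_mul {0} {k}
    (measurableSet_singleton _) (measurableSet_singleton _)
  have hA0 : P w ((A w) ⁻¹' {0}) =
      ENNReal.ofReal (Real.exp (-(lam * a * w)) * (lam * a * w) ^ 0 / (Nat.factorial 0)) := by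
    have := hA w hw0 0
    convert this using 2
    ext; simp
  have hDk : P w ((D w) ⁻¹' {k}) =
      ENNReal.ofReal (Real.exp (-μ) * μ ^ k / (Nat.factorial k)) := by
    have := hD w hw0 k
    convert this using 2
    ext; simp
  calc ENNReal.ofReal (1 * Real.exp (-((lam + (1 - p)) * a + 2 * b * L) * w))
      = ENNReal.ofReal (Real.exp (-((lam + (1 - p)) * a + 2 * b * L) * w)) := by rw [one_mul]
    _ ≤ ENNReal.ofReal ((Real.exp (-(lam * a * w)) * (lam * a * w) ^ 0 / (Nat.factorial 0)) *
        (Real.exp (-μ) * μ ^ k / (Nat.factorial k))) := ENNReal.ofReal_le_ofReal key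
    _ = ENNReal.ofReal (Real.exp (-(lam * a * w)) * (lam * a * w) ^ 0 / (Nat.factorial 0)) *
        ENNReal.ofReal (Real.exp (-μ) * μ ^ k / (Nat.factorial k)) :=
          ENNReal.ofReal_mul (by positivity)
    _ = P w ((A w) ⁻¹' {0}) * P w ((D w) ⁻¹' {k}) := by rw [hA0, hDk]
    _ = P w ((A w) ⁻¹' {0} ∩ (D w) ⁻¹' {k}) := hmul.symm
    _ ≤ P w {ω | (A w ω : ℝ) - (D w ω : ℝ) ≤ -b * w} := measure_mono hsub
end

section
/- For p ∈ (0,1) and λ ∈ (1−p, 1), set ρ(λ) = λ/(1−p) > 1 and let K_λ be the smallest natural number K such that ρ(λ)^{−K} ≤ λ(1−λ)/(p(1−p)) (such K exists since ρ(λ) > 1 and λ(1−λ)/(p(1−p)) > 0). Then K_λ / ln(1/(1−λ)) → 1/ln(1/(1−p)) as λ → 1 from the left. -/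
open Filter Topology

/-! For `ρ > 1` the least `K` with `ρ^{-K} ≤ c` is `⌈-log_ρ c⌉₊`. With `ρ = λ/(1-p)` and
`c = λ(1-λ)/(p(1-p))` we have `-log c = log(1/(1-λ)) + O(1)` and `log ρ → log(1/(1-p))`
as `λ → 1⁻`, and rounding up to an integer is negligible against `log(1/(1-λ)) → ∞`. -/

lemma zpow_neg_natCast_le_iff_neg_logb_le {ρ c : ℝ} (hρ : 1 < ρ) (hc : 0 < c) (K : ℕ) :
    ρ ^ (-(K : ℤ)) ≤ c ↔ -Real.logb ρ c ≤ K := by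
  have hρ0 : 0 < ρ := by linarith
  rw [zpow_neg, zpow_natCast, inv_le_comm₀ (pow_pos hρ0 K) hc,
    ← Real.logb_le_logb hρ (inv_pos.mpr hc) (pow_pos hρ0 K), Real.logb_pow,
    Real.logb_self_eq_one hρ, Real.logb_inv, mul_one]

lemma sInf_zpow_neg_natCast_le_eq_ceil {ρ c : ℝ} (hρ : 1 < ρ) (hc : 0 < c) :
    sInf {K : ℕ | ρ ^ (-(K : ℤ)) ≤ c} = ⌈-Real.logb ρ c⌉₊ := by
  have hset : {K : ℕ | ρ ^ (-(K : ℤ)) ≤ c} = Set.Ici ⌈-Real.logb ρ c⌉₊ := by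
    ext K
    simp only [Set.mem_ofPred_eq, Set.mem_Ici, Nat.ceil_le,
      zpow_neg_natCast_le_iff_neg_logb_le hρ hc]
  rw [hset, csInf_Ici]

lemma tendsto_natCeil_div_of_tendsto_div {α : Type*} {l : Filter α} {x L : α → ℝ} {a : ℝ}
    (hL : Tendsto L l atTop) (ha : 0 < a) (h : Tendsto (fun t => x t / L t) l (𝓝 a)) :
    Tendsto (fun t => (⌈x t⌉₊ : ℝ) / L t) l (𝓝 a) := by
  have hLpos : ∀ᶠ t in l, 0 < L t := hL.eventually_gt_atTop 0
  have hx : ∀ᶠ t in l, 0 ≤ x t := by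
    filter_upwards [hLpos, h.eventually_const_lt ha] with t hLt hxt
    exact (div_pos_iff_of_pos_right hLt).mp hxt |>.le
  have hupper : Tendsto (fun t => x t / L t + 1 / L t) l (𝓝 a) := by
    simpa using h.add (tendsto_inv_atTop_zero.comp hL |>.congr fun t => (one_div _).symm)
  refine tendsto_of_tendsto_of_tendsto_of_le_of_le' h hupper ?_ ?_
  · filter_upwards [hLpos] with t hLt
    exact div_le_div_of_nonneg_right (Nat.le_ceil _) hLt.le
  · filter_upwards [hLpos, hx] with t hLt hxt
    rw [← add_div]
    exact div_le_div_of_nonneg_right (Nat.ceil_lt_add_one hxt).le hLt.le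

lemma tendsto_log_one_div_one_sub_nhdsLT_one :
    Tendsto (fun t : ℝ => Real.log (1 / (1 - t))) (𝓝[<] 1) atTop := by
  have h : Tendsto (fun t : ℝ => 1 - t) (𝓝[<] 1) (𝓝[>] 0) := by
    refine tendsto_nhdsWithin_of_tendsto_nhds_of_eventually_within _ ?_ ?_
    · have h1 : Tendsto (fun t : ℝ => 1 - t) (𝓝 1) (𝓝 (1 - 1)) :=
        tendsto_const_nhds.sub tendsto_id
      simpa using h1.mono_left nhdsWithin_le_nhds
    · filter_upwards [self_mem_nhdsWithin] with t (ht : t < 1)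
      exact sub_pos.mpr ht
  simpa [one_div, Function.comp_def] using
    Real.tendsto_log_atTop.comp (tendsto_inv_nhdsGT_zero.comp h)

lemma tendsto_neg_logb_div_log_one_div_one_sub {C q : ℝ} (hC : 0 < C) (hq : 0 < q)
    (hq1 : q ≠ 1) :
    Tendsto (fun t => -Real.logb (t / q) (t * (1 - t) / C) / Real.log (1 / (1 - t)))
      (𝓝[<] 1) (𝓝 (1 / Real.log (1 / q))) := by
  have hL := tendsto_log_one_div_one_sub_nhdsLT_one
  have hnum :
      Tendsto (fun t => Real.log (C / t) / Real.log (1 / (1 - t)) + 1) (𝓝[<] 1) (𝓝 1) := by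
    have hlog : Tendsto (fun t => Real.log (C / t)) (𝓝[<] 1) (𝓝 (Real.log (C / 1))) :=
      ((continuousAt_const.div continuousAt_id one_ne_zero).log (by simpa using hC.ne')).tendsto
        |>.mono_left nhdsWithin_le_nhds
    simpa only [zero_add] using (hlog.div_atTop hL).add_const 1
  have hden : Tendsto (fun t => Real.log (t / q)) (𝓝[<] 1) (𝓝 (Real.log (1 / q))) :=
    ((continuousAt_id.div continuousAt_const hq.ne').log (by simpa using hq.ne')).tendsto
      |>.mono_left nhdsWithin_le_nhds
  have hlogq : Real.log (1 / q) ≠ 0 := by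
    simpa [Real.log_inv] using Real.log_ne_zero_of_pos_of_ne_one hq hq1
  refine (hnum.div hden hlogq).congr' ?_
  have hmem : ∀ᶠ t in 𝓝[<] (1 : ℝ), t ∈ Set.Ioo 0 1 := Ioo_mem_nhdsLT (by norm_num)
  filter_upwards [hmem, hL.eventually_gt_atTop 0] with t ⟨ht0, ht1⟩ hLt
  have hsplit : -Real.log (t * (1 - t) / C) = Real.log (C / t) + Real.log (1 / (1 - t)) := by
    have h1t : 0 < 1 - t := sub_pos.mpr ht1
    simp only [Real.log_div hC.ne' ht0.ne', Real.log_div (mul_pos ht0 h1t).ne' hC.ne',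
      Real.log_mul ht0.ne' h1t.ne', one_div, Real.log_inv]
    ring
  rw [Pi.div_apply, Real.logb, ← neg_div, hsplit]
  field_simp

/-- For `p ∈ (0,1)` and `λ ∈ (1−p,1)`, set `ρ(λ) = λ/(1−p)` and let `K_λ` be the smallest
natural number `K` with `ρ(λ)^{−K} ≤ λ(1−λ)/(p(1−p))`. Then
`K_λ / ln(1/(1−λ)) → 1/ln(1/(1−p))` as `λ → 1⁻`. -/
theorem stmt_14 (p : ℝ) (hp : p ∈ Set.Ioo (0 : ℝ) 1) :
    Tendsto
      (fun lam : ℝ =>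
        ((sInf {K : ℕ | (lam / (1 - p)) ^ (-(K : ℤ)) ≤ lam * (1 - lam) / (p * (1 - p))} : ℕ) : ℝ)
          / Real.log (1 / (1 - lam)))
      (nhdsWithin 1 (Set.Iio 1)) (nhds (1 / Real.log (1 / (1 - p)))) := by
  obtain ⟨hp0, hp1⟩ := hp
  have hq : 0 < 1 - p := sub_pos.mpr hp1
  have hlimit : 0 < 1 / Real.log (1 / (1 - p)) :=
    one_div_pos.mpr (Real.log_pos (one_lt_one_div hq (by linarith)))
  have hratio := tendsto_neg_logb_div_log_one_div_one_sub (mul_pos hp0 hq) hq (by linarith)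
  refine (tendsto_natCeil_div_of_tendsto_div tendsto_log_one_div_one_sub_nhdsLT_one hlimit
    hratio).congr' ?_
  filter_upwards [Ioo_mem_nhdsLT (show 1 - p < 1 by linarith)] with lam ⟨hlam, hlam1⟩
  have hc : 0 < lam * (1 - lam) / (p * (1 - p)) :=
    div_pos (mul_pos (by linarith) (sub_pos.mpr hlam1)) (mul_pos hp0 hq)
  rw [sInf_zpow_neg_natCast_le_eq_ceil ((one_lt_div hq).mpr hlam) hc]
end

section
/- For p ∈ (0,1) and λ ∈ (1−p, 1), set ρ(λ) = λ/(1−p) > 1, let K_λ be the smallest natural number K such that ρ(λ)^{−K} ≤ λ(1−λ)/(p(1−p)), and define q_λ = ( Σ_{i=0}^{K_λ} i·ρ(λ)^i ) / ( Σ_{i=0}^{K_λ} ρ(λ)^i ). Then q_λ · ln(1/(1−p)) / ln(1/(1−λ)) → 1 as λ → 1 from the left. -/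
open Filter Finset

lemma sum_id_mul_pow_le (x : ℝ) (h0 : 0 ≤ x) (h1 : x < 1) (n : ℕ) :
    ∑ j ∈ Finset.range n, (j : ℝ) * x ^ j ≤ x / (1 - x) ^ 2 := by
  have hx : ‖x‖ < 1 := by rwa [Real.norm_eq_abs, abs_of_nonneg h0]
  have hs : Summable (fun j : ℕ => (j : ℝ) * x ^ j) := by
    simpa [pow_one] using summable_pow_mul_geometric_of_norm_lt_one 1 hx
  calc ∑ j ∈ Finset.range n, (j : ℝ) * x ^ j
      ≤ ∑' j : ℕ, (j : ℝ) * x ^ j := Summable.sum_le_tsum _ (fun i _ => by positivity) hs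
    _ = x / (1 - x) ^ 2 := tsum_coe_mul_geometric_of_norm_lt_one hx

set_option maxHeartbeats 1000000 in
/-- For `p ∈ (0,1)` and `λ ∈ (1−p,1)`, set `ρ(λ) = λ/(1−p)`, let `K_λ` be the smallest natural
number `K` with `ρ(λ)^{−K} ≤ λ(1−λ)/(p(1−p))`, and let
`q_λ = (Σ_{i=0}^{K_λ} i·ρ(λ)^i)/(Σ_{i=0}^{K_λ} ρ(λ)^i)`. Then
`q_λ · ln(1/(1−p)) / ln(1/(1−λ)) → 1` as `λ → 1⁻`. -/
theorem stmt_15 (p : ℝ) (hp : p ∈ Set.Ioo (0 : ℝ) 1) :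
    Tendsto
      (fun lam : ℝ =>
        (fun K : ℕ =>
            ((∑ i ∈ Finset.range (K + 1), (i : ℝ) * (lam / (1 - p)) ^ i) /
                (∑ i ∈ Finset.range (K + 1), (lam / (1 - p)) ^ i)) *
              Real.log (1 / (1 - p)) / Real.log (1 / (1 - lam)))
          (sInf {K : ℕ | (lam / (1 - p)) ^ (-(K : ℤ)) ≤ lam * (1 - lam) / (p * (1 - p))}))
      (nhdsWithin 1 (Set.Iio 1)) (nhds 1) := by
  obtain ⟨hp0, hp1⟩ := hp
  have h1p : 0 < 1 - p := by linarith
  set lam0 : ℝ := 1 - p * (1 - p) with hlam0_def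
  have hlam0_lt : lam0 < 1 := by nlinarith
  have hlam0_gt : 1 - p < lam0 := by nlinarith
  have hlam0_pos : 0 < lam0 := by nlinarith
  set r0 : ℝ := (1 - p) / lam0 with hr0_def
  have hr0_pos : 0 < r0 := div_pos h1p hlam0_pos
  have hr0_lt1 : r0 < 1 := (div_lt_one hlam0_pos).mpr hlam0_gt
  set C : ℝ := r0 / (1 - r0) ^ 2 with hC_def
  have hC_nonneg : 0 ≤ C := by positivity
  set c : ℝ := Real.log (1 / (1 - p)) with hc_def
  have hc_pos : 0 < c := Real.log_pos (one_lt_one_div h1p (by linarith))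
  set L : ℝ → ℝ := fun lam => Real.log (1 / (1 - lam)) with hL_def
  set B : ℝ → ℝ := fun lam => -Real.log (lam * (1 - lam) / (p * (1 - p))) with hB_def
  set g : ℝ → ℝ := fun lam => B lam / Real.log (lam / (1 - p)) with hg_def
  have hev : ∀ᶠ lam in nhdsWithin (1:ℝ) (Set.Iio 1), lam ∈ Set.Ioo lam0 1 :=
    Ioo_mem_nhdsLT_of_mem ⟨hlam0_lt, le_refl 1⟩
  -- L tends to atTop
  have hLtop : Tendsto L (nhdsWithin (1:ℝ) (Set.Iio 1)) atTop := by
    have h1 : Tendsto (fun lam : ℝ => 1 - lam) (nhdsWithin (1:ℝ) (Set.Iio 1))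
        (nhdsWithin (0:ℝ) (Set.Ioi 0)) := by
      rw [tendsto_nhdsWithin_iff]
      constructor
      · have : Tendsto (fun lam : ℝ => 1 - lam) (nhds (1:ℝ)) (nhds (1 - 1 : ℝ)) :=
          (tendsto_const_nhds.sub tendsto_id)
        simpa using this.mono_left nhdsWithin_le_nhds
      · filter_upwards [eventually_mem_nhdsWithin] with lam hlam
        simp only [Set.mem_Iio] at hlam
        simpa using hlam
    have h2 : Tendsto (fun lam : ℝ => Real.log (1 - lam)) (nhdsWithin (1:ℝ) (Set.Iio 1)) atBot :=
      Real.tendsto_log_nhdsGT_zero.comp h1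
    have h3 : Tendsto (fun lam : ℝ => -Real.log (1 - lam)) (nhdsWithin (1:ℝ) (Set.Iio 1)) atTop :=
      tendsto_neg_atBot_atTop.comp h2
    have heq : L = fun lam : ℝ => -Real.log (1 - lam) := by
      funext lam; simp [hL_def, one_div, Real.log_inv]
    rw [heq]; exact h3
  -- c / L → 0
  have hT2 : Tendsto (fun lam => c / L lam) (nhdsWithin (1:ℝ) (Set.Iio 1)) (nhds 0) :=
    Tendsto.div_atTop tendsto_const_nhds hLtop
  -- B/L → 1
  have hBL : Tendsto (fun lam => B lam / L lam) (nhdsWithin (1:ℝ) (Set.Iio 1)) (nhds 1) := by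
    set d : ℝ → ℝ := fun lam => Real.log (p * (1 - p)) - Real.log lam with hd_def
    have hd : Tendsto d (nhdsWithin (1:ℝ) (Set.Iio 1)) (nhds (Real.log (p * (1 - p)))) := by
      have hlog : Tendsto (fun lam : ℝ => Real.log lam) (nhdsWithin (1:ℝ) (Set.Iio 1))
          (nhds (Real.log 1)) :=
        ((Real.continuousAt_log one_ne_zero).tendsto.comp
          (tendsto_id.mono_left nhdsWithin_le_nhds))
      have h := (tendsto_const_nhds (x := Real.log (p * (1 - p)))).sub hlog
      simpa [hd_def] using h
    have hdL : Tendsto (fun lam => d lam / L lam) (nhdsWithin (1:ℝ) (Set.Iio 1)) (nhds 0) :=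
      Tendsto.div_atTop hd hLtop
    have hlim : Tendsto (fun lam => 1 + d lam / L lam) (nhdsWithin (1:ℝ) (Set.Iio 1))
        (nhds 1) := by
      have h := (tendsto_const_nhds (x := (1:ℝ))).add hdL
      simpa using h
    apply hlim.congr'
    filter_upwards [hev] with lam hlam
    obtain ⟨hl0, hl1⟩ := hlam
    have hlam_pos : 0 < lam := lt_trans hlam0_pos hl0
    have h1l : 0 < 1 - lam := by linarith
    have hLpos : 0 < L lam := Real.log_pos (one_lt_one_div h1l (by linarith))
    have hBeq : B lam = L lam + d lam := by
      simp only [hB_def, hd_def, hL_def]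
      rw [Real.log_div (mul_pos hlam_pos h1l).ne' (mul_pos hp0 h1p).ne',
        Real.log_mul hlam_pos.ne' h1l.ne', one_div, Real.log_inv]
      ring
    rw [hBeq]
    field_simp
  -- c / log rho → 1
  have hclr : Tendsto (fun lam => c / Real.log (lam / (1 - p)))
      (nhdsWithin (1:ℝ) (Set.Iio 1)) (nhds 1) := by
    have h1 : Tendsto (fun lam : ℝ => lam / (1 - p)) (nhdsWithin (1:ℝ) (Set.Iio 1))
        (nhds (1 / (1 - p))) :=
      (tendsto_id.div_const (1 - p)).mono_left nhdsWithin_le_nhds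
    have h2 : Tendsto (fun lam : ℝ => Real.log (lam / (1 - p)))
        (nhdsWithin (1:ℝ) (Set.Iio 1)) (nhds c) :=
      (Real.continuousAt_log (by positivity)).tendsto.comp h1
    have h3 := (tendsto_const_nhds (x := c)).div h2 (ne_of_gt hc_pos)
    rw [div_self (ne_of_gt hc_pos)] at h3
    exact h3
  -- g * c / L → 1
  have hT1 : Tendsto (fun lam => g lam * c / L lam) (nhdsWithin (1:ℝ) (Set.Iio 1)) (nhds 1) := by
    have heq : (fun lam => g lam * c / L lam)
        = fun lam => (B lam / L lam) * (c / Real.log (lam / (1 - p))) := by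
      funext lam; simp only [hg_def]; ring
    rw [heq]
    have := hBL.mul hclr
    simpa using this
  -- squeeze
  apply tendsto_of_tendsto_of_tendsto_of_le_of_le'
    (g := fun lam => g lam * c / L lam - C * (c / L lam))
    (h := fun lam => g lam * c / L lam + c / L lam)
  · have := hT1.sub (hT2.const_mul C); simpa using this
  · have := hT1.add hT2; simpa using this
  all_goals {
    filter_upwards [hev] with lam hlam
    obtain ⟨hl0, hl1⟩ := hlam
    have hlam_pos : 0 < lam := lt_trans hlam0_pos hl0
    have h1l : 0 < 1 - lam := by linarith
    have hLpos : 0 < L lam := Real.log_pos (one_lt_one_div h1l (by linarith))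
    have hLrw : Real.log (1 / (1 - lam)) = L lam := rfl
    rw [hLrw]
    set rho : ℝ := lam / (1 - p) with hrho_def
    have hrho1 : 1 < rho := by
      rw [hrho_def, lt_div_iff₀ h1p]; linarith
    have hrho_pos : 0 < rho := lt_trans one_pos hrho1
    have hlr_pos : 0 < Real.log rho := Real.log_pos hrho1
    have hA_pos : 0 < lam * (1 - lam) / (p * (1 - p)) :=
      div_pos (mul_pos hlam_pos h1l) (mul_pos hp0 h1p)
    have hA_lt1 : lam * (1 - lam) / (p * (1 - p)) < 1 := by
      rw [div_lt_one (mul_pos hp0 h1p)]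
      nlinarith
    have hB_pos : 0 < B lam := by
      simp only [hB_def]
      linarith [Real.log_neg hA_pos hA_lt1]
    have hmem : ∀ K : ℕ, (K ∈ {K : ℕ | rho ^ (-(K : ℤ)) ≤ lam * (1 - lam) / (p * (1 - p))})
        ↔ B lam / Real.log rho ≤ (K : ℝ) := by
      intro K
      have hz : rho ^ (-(K : ℤ)) = (rho ^ K)⁻¹ := by
        rw [zpow_neg, zpow_natCast]
      simp only [Set.mem_setOf_eq, hz]
      rw [inv_le_comm₀ (pow_pos hrho_pos K) hA_pos,
        ← Real.log_le_log_iff (inv_pos.mpr hA_pos) (pow_pos hrho_pos K),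
        Real.log_inv, Real.log_pow, div_le_iff₀ hlr_pos]
    set K : ℕ := sInf {K : ℕ | rho ^ (-(K : ℤ)) ≤ lam * (1 - lam) / (p * (1 - p))} with hK_def
    have hne : {K : ℕ | rho ^ (-(K : ℤ)) ≤ lam * (1 - lam) / (p * (1 - p))}.Nonempty :=
      ⟨⌈B lam / Real.log rho⌉₊, (hmem _).mpr (Nat.le_ceil _)⟩
    have hK_lb : B lam / Real.log rho ≤ (K : ℝ) := (hmem K).mp (Nat.sInf_mem hne)
    have hK_ub : (K : ℝ) ≤ B lam / Real.log rho + 1 := by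
      have h1 : K ≤ ⌈B lam / Real.log rho⌉₊ :=
        Nat.sInf_le ((hmem _).mpr (Nat.le_ceil _))
      have h2 : (⌈B lam / Real.log rho⌉₊ : ℝ) < B lam / Real.log rho + 1 :=
        Nat.ceil_lt_add_one (div_nonneg hB_pos.le hlr_pos.le)
      exact le_of_lt (lt_of_le_of_lt (Nat.cast_le.mpr h1) h2)
    set S1 : ℝ := ∑ i ∈ Finset.range (K + 1), rho ^ i with hS1_def
    set S2 : ℝ := ∑ i ∈ Finset.range (K + 1), (i : ℝ) * rho ^ i with hS2_def
    have hS1_pos : 0 < S1 := by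
      rw [hS1_def]
      exact Finset.sum_pos (fun i _ => pow_pos hrho_pos i) nonempty_range_add_one
    have hq_ub : S2 / S1 ≤ (K : ℝ) := by
      rw [div_le_iff₀ hS1_pos, hS1_def, Finset.mul_sum, hS2_def]
      apply Finset.sum_le_sum
      intro i hi
      have : (i : ℝ) ≤ (K : ℝ) := Nat.cast_le.mpr (Nat.lt_succ_iff.mp (mem_range.mp hi))
      exact mul_le_mul_of_nonneg_right this (pow_pos hrho_pos i).le
    set r : ℝ := rho⁻¹ with hr_def
    have hr_pos : 0 < r := inv_pos.mpr hrho_pos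
    have hr_le_r0 : r ≤ r0 := by
      rw [hr_def, hrho_def, hr0_def, inv_div]
      exact div_le_div_of_nonneg_left h1p.le hlam0_pos hl0.le
    have hsum : ∑ i ∈ Finset.range (K + 1), (((K : ℝ) - i) * rho ^ i) ≤ C * rho ^ K := by
      have step1 : ∀ i ∈ Finset.range (K + 1),
          ((K : ℝ) - i) * rho ^ i = rho ^ K * (((K - i : ℕ) : ℝ) * r ^ (K - i)) := by
        intro i hi
        have hiK : i ≤ K := Nat.lt_succ_iff.mp (mem_range.mp hi)
        have h1 : rho ^ K = rho ^ i * rho ^ (K - i) := by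
          rw [← pow_add, Nat.add_sub_cancel' hiK]
        have h2 : ((K - i : ℕ) : ℝ) = (K : ℝ) - i := Nat.cast_sub hiK
        have h3 : (rho ^ (K - i)) ≠ 0 := (pow_pos hrho_pos _).ne'
        rw [h1, h2, hr_def, inv_pow]
        field_simp
      rw [Finset.sum_congr rfl step1, ← Finset.mul_sum]
      have reflect : ∑ i ∈ Finset.range (K + 1), ((K - i : ℕ) : ℝ) * r ^ (K - i)
          = ∑ j ∈ Finset.range (K + 1), (j : ℝ) * r ^ j := by
        have := Finset.sum_range_reflect (fun j => (j : ℝ) * r ^ j) (K + 1)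
        simpa using this
      rw [reflect]
      have h1 : ∑ j ∈ Finset.range (K + 1), (j : ℝ) * r ^ j
          ≤ ∑ j ∈ Finset.range (K + 1), (j : ℝ) * r0 ^ j := by
        apply Finset.sum_le_sum
        intro j _
        exact mul_le_mul_of_nonneg_left (pow_le_pow_left₀ hr_pos.le hr_le_r0 j)
          (Nat.cast_nonneg j)
      have h2 := sum_id_mul_pow_le r0 hr0_pos.le hr0_lt1 (K + 1)
      calc rho ^ K * ∑ j ∈ Finset.range (K + 1), (j : ℝ) * r ^ j
          ≤ rho ^ K * C := mul_le_mul_of_nonneg_left (h1.trans h2) (pow_pos hrho_pos K).le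
        _ = C * rho ^ K := mul_comm _ _
    have hrhoK_le_S1 : rho ^ K ≤ S1 := by
      rw [hS1_def]
      exact Finset.single_le_sum (fun i _ => (pow_pos hrho_pos i).le) (self_mem_range_succ K)
    have hKS : (K : ℝ) * S1 - S2 = ∑ i ∈ Finset.range (K + 1), (((K : ℝ) - i) * rho ^ i) := by
      rw [hS1_def, hS2_def, Finset.mul_sum, ← Finset.sum_sub_distrib]
      exact Finset.sum_congr rfl (fun i _ => by ring)
    have hq_lb : (K : ℝ) - C ≤ S2 / S1 := by
      rw [le_div_iff₀ hS1_pos]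
      have hCS : C * rho ^ K ≤ C * S1 := mul_le_mul_of_nonneg_left hrhoK_le_S1 hC_nonneg
      linarith [hsum, hKS, hCS]
    have hcL_pos : 0 < c / L lam := div_pos hc_pos hLpos
    have hgK : g lam ≤ (K : ℝ) := hK_lb
    have hKg : (K : ℝ) ≤ g lam + 1 := hK_ub
    have hub1 : S2 / S1 * (c / L lam) ≤ (K : ℝ) * (c / L lam) :=
      mul_le_mul_of_nonneg_right hq_ub hcL_pos.le
    have hub2 : (K : ℝ) * (c / L lam) ≤ (g lam + 1) * (c / L lam) :=
      mul_le_mul_of_nonneg_right hKg hcL_pos.le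
    have hlb1 : ((K : ℝ) - C) * (c / L lam) ≤ S2 / S1 * (c / L lam) :=
      mul_le_mul_of_nonneg_right hq_lb hcL_pos.le
    have hlb2 : (g lam - C) * (c / L lam) ≤ ((K : ℝ) - C) * (c / L lam) :=
      mul_le_mul_of_nonneg_right (by linarith) hcL_pos.le
    have hfin : S2 / S1 * c / L lam = S2 / S1 * (c / L lam) := by ring
    have hfin2 : g lam * c / L lam = g lam * (c / L lam) := by ring
    linarith [hub1, hub2, hlb1, hlb2, hfin, hfin2]
  }
end
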